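/- The cascade map G has at least one fixed point in [0,1]^ℕ: there exists a^∞ ∈ [0,1]^ℕ with G_j(a^∞) = a^∞_j for every j ∈ ℕ. -/

import Mathlib

/-- In-degree marginal `P⁺_k = Σ_j P_{jk}` of the node-type distribution. -/
noncomputable def Pplus (P : ℕ → ℕ → ℝ) (k : ℕ) : ℝ := ∑' j, P j k

/-- In-degree marginal `Q⁻_j = Σ_k Q_{kj}` of the edge-type distribution. -/
noncomputable def Qminus (Q : ℕ → ℕ → ℝ) (j : ℕ) : ℝ := ∑' k, Q k j

/-- Initially defaulted edge fractions `σ⁰_{kj} = Σ_{j'} ρ⁰_{j'k} P_{j'k} / P⁺_k`. -/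
noncomputable def sigma0 (P ρ0 : ℕ → ℕ → ℝ) (k : ℕ) : ℝ :=
  (∑' j', ρ0 j' k * P j' k) / Pplus P k

/-- Binomial tail `Σ_{m=M}^{j} C(j,m) x^m (1−x)^{j−m}`. -/
noncomputable def binomialTail (j M : ℕ) (x : ℝ) : ℝ :=
  ∑ m ∈ Finset.Icc M j, (j.choose m : ℝ) * x ^ m * (1 - x) ^ (j - m)

/-- The cascade map `G` of the extended Gai–Kapadia model:
`G_j(a) = (1/Q⁻_j) Σ_k Q_{kj} [σ⁰_{kj} + Σ_{j'} (1−ρ⁰_{j'k}) (P_{j'k}/P⁺_k)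
  Σ_{m=M_{j'k}}^{j'} C(j',m) a_{j'}^m (1−a_{j'})^{j'−m}]`. -/
noncomputable def cascadeMap (P Q ρ0 : ℕ → ℕ → ℝ) (M : ℕ → ℕ → ℕ)
    (a : ℕ → ℝ) (j : ℕ) : ℝ :=
  (1 / Qminus Q j) * ∑' k, Q k j * (sigma0 P ρ0 k +
    ∑' j', (1 - ρ0 j' k) * (P j' k / Pplus P k) * binomialTail j' (M j' k) (a j'))

/-!
Since `σ⁰` is itself a `P`-weighted sum, every coordinate of `G` is a `Q`-weighted mean of
`P`-weighted means of the quantities `ρ⁰ + (1 - ρ⁰) T`, where `T(x) = ∑_{m ≥ M} C(j, m) x^m (1-x)^(j-m)`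
is a binomial tail. Such a tail maps `[0,1]` into itself and is monotone there: it is a partial sum
of Bernstein polynomials, whose derivative telescopes to `j b_{j-1, M-1} ≥ 0`. Weighted means
preserve both properties, so `G` is a monotone self-map of the cube `[0,1]^ℕ`, which is a complete
lattice, and Knaster–Tarski yields a fixed point.
-/

open Set Polynomial

lemma bernsteinPolynomial_eval_nonneg (n ν : ℕ) {x : ℝ} (hx : x ∈ Icc (0 : ℝ) 1) :
    0 ≤ (bernsteinPolynomial ℝ n ν).eval x := by
  have : 0 ≤ 1 - x := sub_nonneg.2 hx.2
  simp only [bernsteinPolynomial, eval_mul, eval_pow, eval_natCast, eval_X, eval_sub, eval_one]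
  exact mul_nonneg (mul_nonneg (Nat.cast_nonneg _) (pow_nonneg hx.1 _)) (pow_nonneg this _)

lemma derivative_sum_bernsteinPolynomial_Icc {R : Type*} [CommRing R] (j μ : ℕ) :
    derivative (∑ m ∈ Finset.Icc (μ + 1) j, bernsteinPolynomial R j m) =
      j * bernsteinPolynomial R (j - 1) μ := by
  rcases le_or_gt j μ with hjμ | hμj
  · rw [Finset.Icc_eq_empty (by omega), Finset.sum_empty, map_zero]
    rcases j with _ | j
    · simp
    · rw [bernsteinPolynomial.eq_zero_of_lt R (by omega), mul_zero]
  · rw [← Finset.Ico_add_one_right_eq_Icc, Finset.sum_Ico_eq_sum_range, map_sum]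
    simp only [add_right_comm μ 1, bernsteinPolynomial.derivative_succ, ← Finset.mul_sum]
    congr 1
    refine (Finset.sum_range_sub' (fun i => bernsteinPolynomial R (j - 1) (μ + i)) _).trans ?_
    have hlast : j - 1 < μ + (j + 1 - (μ + 1)) := by omega
    rw [add_zero, bernsteinPolynomial.eq_zero_of_lt R hlast, sub_zero]

lemma binomialTail_eq_eval (j M : ℕ) (x : ℝ) :
    binomialTail j M x = (∑ m ∈ Finset.Icc M j, bernsteinPolynomial ℝ j m).eval x := by
  simp [binomialTail, bernsteinPolynomial, eval_finsetSum]

lemma binomialTail_mem_Icc (j M : ℕ) {x : ℝ} (hx : x ∈ Icc (0 : ℝ) 1) :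
    binomialTail j M x ∈ Icc (0 : ℝ) 1 := by
  rw [binomialTail_eq_eval, eval_finsetSum]
  refine ⟨Finset.sum_nonneg fun m _ => bernsteinPolynomial_eval_nonneg j m hx, ?_⟩
  calc ∑ m ∈ Finset.Icc M j, (bernsteinPolynomial ℝ j m).eval x
      ≤ ∑ m ∈ Finset.range (j + 1), (bernsteinPolynomial ℝ j m).eval x :=
        Finset.sum_le_sum_of_subset_of_nonneg
          (fun m hm => Finset.mem_range.2 (Nat.lt_succ_of_le (Finset.mem_Icc.1 hm).2))
          fun m _ _ => bernsteinPolynomial_eval_nonneg j m hx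
    _ = 1 := by rw [← eval_finsetSum, bernsteinPolynomial.sum, eval_one]

lemma binomialTail_monotoneOn (j M : ℕ) : MonotoneOn (binomialTail j M) (Icc 0 1) := by
  rw [funext (binomialTail_eq_eval j M)]
  rcases M with _ | μ
  · rw [← Finset.Ico_add_one_right_eq_Icc, ← Finset.range_eq_Ico, bernsteinPolynomial.sum]
    simp only [eval_one]
    exact monotoneOn_const
  · refine monotoneOn_of_deriv_nonneg (convex_Icc 0 1) (Polynomial.continuousOn _)
      (Polynomial.differentiableOn _) fun x hx => ?_
    rw [interior_Icc] at hx
    rw [Polynomial.deriv, derivative_sum_bernsteinPolynomial_Icc, eval_mul, eval_natCast]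
    exact mul_nonneg (Nat.cast_nonneg j)
      (bernsteinPolynomial_eval_nonneg _ _ (Ioo_subset_Icc_self hx))

lemma summable_of_tsum_ne_zero {ι : Type*} {w : ι → ℝ} (h : ∑' i, w i ≠ 0) : Summable w :=
  not_not.1 fun hw => h (tsum_eq_zero_of_not_summable hw)

section WeightedMean

variable {ι : Type*} {w f g : ι → ℝ}

noncomputable def weightedMean (w f : ι → ℝ) : ℝ := (1 / ∑' i, w i) * ∑' i, w i * f i

lemma summable_mul_of_mem_Icc (hw : ∀ i, 0 ≤ w i) (hws : Summable w)
    (hf : ∀ i, f i ∈ Icc (0 : ℝ) 1) : Summable fun i => w i * f i :=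
  Summable.of_nonneg_of_le (fun i => mul_nonneg (hw i) (hf i).1)
    (fun i => mul_le_of_le_one_right (hw i) (hf i).2) hws

lemma weightedMean_mem_Icc (hw : ∀ i, 0 ≤ w i) (hpos : 0 < ∑' i, w i)
    (hf : ∀ i, f i ∈ Icc (0 : ℝ) 1) : weightedMean w f ∈ Icc (0 : ℝ) 1 := by
  have hws := summable_of_tsum_ne_zero hpos.ne'
  rw [weightedMean, one_div_mul_eq_div]
  exact ⟨div_nonneg (tsum_nonneg fun i => mul_nonneg (hw i) (hf i).1) hpos.le,
    (div_le_one hpos).2 <| (summable_mul_of_mem_Icc hw hws hf).tsum_le_tsum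
      (fun i => mul_le_of_le_one_right (hw i) (hf i).2) hws⟩

lemma weightedMean_mono (hw : ∀ i, 0 ≤ w i) (hws : Summable w)
    (hf : ∀ i, f i ∈ Icc (0 : ℝ) 1) (hg : ∀ i, g i ∈ Icc (0 : ℝ) 1) (hfg : ∀ i, f i ≤ g i) :
    weightedMean w f ≤ weightedMean w g :=
  mul_le_mul_of_nonneg_left
    ((summable_mul_of_mem_Icc hw hws hf).tsum_le_tsum
      (fun i => mul_le_mul_of_nonneg_left (hfg i) (hw i)) (summable_mul_of_mem_Icc hw hws hg))
    (one_div_nonneg.2 (tsum_nonneg hw))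

end WeightedMean

lemma add_one_sub_mul_mem_Icc {ρ t : ℝ} (hρ : ρ ∈ Icc (0 : ℝ) 1) (ht : t ∈ Icc (0 : ℝ) 1) :
    ρ + (1 - ρ) * t ∈ Icc (0 : ℝ) 1 :=
  ⟨by nlinarith [hρ.1, hρ.2, ht.1], by nlinarith [hρ.1, hρ.2, ht.2]⟩

theorem exists_fixedPoint_of_mapsTo_of_monotoneOn {α : Type*} [ConditionallyCompleteLattice α]
    {a b : α} (hab : a ≤ b) {F : α → α} (hmaps : MapsTo F (Icc a b) (Icc a b))
    (hmono : MonotoneOn F (Icc a b)) : ∃ x ∈ Icc a b, F x = x := by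
  have : Fact (a ≤ b) := ⟨hab⟩
  let F' : Icc a b →o Icc a b := ⟨hmaps.restrict F _ _, fun x y hxy => hmono x.2 y.2 hxy⟩
  exact ⟨F'.lfp, F'.lfp.2, congrArg Subtype.val F'.map_lfp⟩

lemma Pi.mem_Icc_iff {ι : Type*} {α : ι → Type*} [∀ i, Preorder (α i)] {l u a : ∀ i, α i} :
    a ∈ Icc l u ↔ ∀ i, a i ∈ Icc (l i) (u i) := by
  rw [← pi_univ_Icc, mem_univ_pi]

section CascadeMap

variable {P Q ρ0 : ℕ → ℕ → ℝ} {M : ℕ → ℕ → ℕ}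

lemma sigma0_add_tsum_eq_weightedMean {k : ℕ} (hP : ∀ j, 0 ≤ P j k) (hPplus : 0 < Pplus P k)
    (hρ0 : ∀ j, ρ0 j k ∈ Icc (0 : ℝ) 1) {t : ℕ → ℝ} (ht : ∀ j, t j ∈ Icc (0 : ℝ) 1) :
    sigma0 P ρ0 k + ∑' j, (1 - ρ0 j k) * (P j k / Pplus P k) * t j =
      weightedMean (P · k) fun j => ρ0 j k + (1 - ρ0 j k) * t j := by
  have hPs : Summable (P · k) := summable_of_tsum_ne_zero hPplus.ne'
  have hdefaulted := summable_mul_of_mem_Icc hP hPs hρ0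
  have hsurviving := summable_mul_of_mem_Icc hP hPs (f := fun j => (1 - ρ0 j k) * t j)
    fun j => unitInterval.mul_mem (Icc.mem_iff_one_sub_mem.1 (hρ0 j)) (ht j)
  simp only [weightedMean, mul_add, hdefaulted.tsum_add hsurviving]
  rw [sigma0, Pplus, ← tsum_div_const, ← tsum_mul_left, ← tsum_mul_left]
  congr 1 <;> exact tsum_congr fun j => by ring

lemma cascadeMap_eq_weightedMean (hP : ∀ j k, 0 ≤ P j k) (hPplus : ∀ k, 0 < Pplus P k)
    (hρ0 : ∀ j k, ρ0 j k ∈ Icc (0 : ℝ) 1) {a : ℕ → ℝ} (ha : ∀ j, a j ∈ Icc (0 : ℝ) 1) (j : ℕ) :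
    cascadeMap P Q ρ0 M a j = weightedMean (Q · j) fun k => weightedMean (P · k) fun j' =>
      ρ0 j' k + (1 - ρ0 j' k) * binomialTail j' (M j' k) (a j') := by
  rw [cascadeMap, weightedMean, Qminus]
  congr 1
  exact tsum_congr fun k => by
    rw [sigma0_add_tsum_eq_weightedMean (hP · k) (hPplus k) (hρ0 · k)
      fun j' => binomialTail_mem_Icc _ _ (ha j')]

lemma cascadeMap_mapsTo (hP : ∀ j k, 0 ≤ P j k) (hPplus : ∀ k, 0 < Pplus P k)
    (hQ : ∀ k j, 0 ≤ Q k j) (hQminus : ∀ j, 0 < Qminus Q j)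
    (hρ0 : ∀ j k, ρ0 j k ∈ Icc (0 : ℝ) 1) :
    MapsTo (cascadeMap P Q ρ0 M) (Icc 0 1) (Icc 0 1) := by
  intro a ha
  rw [Pi.mem_Icc_iff] at ha ⊢
  intro j
  rw [cascadeMap_eq_weightedMean hP hPplus hρ0 ha]
  exact weightedMean_mem_Icc (hQ · j) (hQminus j) fun k =>
    weightedMean_mem_Icc (hP · k) (hPplus k) fun j' =>
      add_one_sub_mul_mem_Icc (hρ0 j' k) (binomialTail_mem_Icc _ _ (ha j'))

lemma cascadeMap_monotoneOn (hP : ∀ j k, 0 ≤ P j k) (hPplus : ∀ k, 0 < Pplus P k)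
    (hQ : ∀ k j, 0 ≤ Q k j) (hQminus : ∀ j, 0 < Qminus Q j)
    (hρ0 : ∀ j k, ρ0 j k ∈ Icc (0 : ℝ) 1) :
    MonotoneOn (cascadeMap P Q ρ0 M) (Icc 0 1) := by
  intro a ha b hb hab j
  rw [Pi.mem_Icc_iff] at ha hb
  have hmem : ∀ {c : ℕ → ℝ}, (∀ j, c j ∈ Icc (0 : ℝ) 1) → ∀ j' k,
      ρ0 j' k + (1 - ρ0 j' k) * binomialTail j' (M j' k) (c j') ∈ Icc (0 : ℝ) 1 :=
    fun hc j' k => add_one_sub_mul_mem_Icc (hρ0 j' k) (binomialTail_mem_Icc _ _ (hc j'))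
  have hle : ∀ j' k, ρ0 j' k + (1 - ρ0 j' k) * binomialTail j' (M j' k) (a j') ≤
      ρ0 j' k + (1 - ρ0 j' k) * binomialTail j' (M j' k) (b j') := fun j' k =>
    add_le_add_right (mul_le_mul_of_nonneg_left
      (binomialTail_monotoneOn _ _ (ha j') (hb j') (hab j')) (sub_nonneg.2 (hρ0 j' k).2)) _
  rw [cascadeMap_eq_weightedMean hP hPplus hρ0 ha, cascadeMap_eq_weightedMean hP hPplus hρ0 hb]
  exact weightedMean_mono (hQ · j) (summable_of_tsum_ne_zero (hQminus j).ne')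
    (fun k => weightedMean_mem_Icc (hP · k) (hPplus k) (hmem ha · k))
    (fun k => weightedMean_mem_Icc (hP · k) (hPplus k) (hmem hb · k))
    fun k => weightedMean_mono (hP · k) (summable_of_tsum_ne_zero (hPplus k).ne')
      (hmem ha · k) (hmem hb · k) (hle · k)

end CascadeMap

theorem cascadeMap_exists_fixedPoint_general
    (P Q ρ0 : ℕ → ℕ → ℝ) (M : ℕ → ℕ → ℕ)
    (hP : ∀ j k, 0 ≤ P j k)
    (hPplus : ∀ k, 0 < Pplus P k)
    (hQ : ∀ k j, 0 ≤ Q k j)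
    (hQminus : ∀ j, 0 < Qminus Q j)
    (hρ0 : ∀ j k, ρ0 j k ∈ Set.Icc (0 : ℝ) 1) :
    ∃ ainf : ℕ → ℝ, (∀ j, ainf j ∈ Set.Icc (0 : ℝ) 1) ∧
      ∀ j, cascadeMap P Q ρ0 M ainf j = ainf j := by
  obtain ⟨a, ha, hfix⟩ := exists_fixedPoint_of_mapsTo_of_monotoneOn zero_le_one
    (cascadeMap_mapsTo hP hPplus hQ hQminus hρ0) (cascadeMap_monotoneOn hP hPplus hQ hQminus hρ0)
  exact ⟨a, Pi.mem_Icc_iff.1 ha, congrFun hfix⟩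

/-- The cascade map `G` has at least one fixed point in `[0,1]^ℕ`
(Knaster–Tarski). -/
theorem cascadeMap_exists_fixedPoint
    (P Q ρ0 : ℕ → ℕ → ℝ) (M : ℕ → ℕ → ℕ)
    (hP : ∀ j k, 0 ≤ P j k) (hPsum : HasSum (fun p : ℕ × ℕ => P p.1 p.2) 1)
    (hPplus : ∀ k, 0 < Pplus P k)
    (hQ : ∀ k j, 0 ≤ Q k j) (hQsum : HasSum (fun p : ℕ × ℕ => Q p.1 p.2) 1)
    (hQminus : ∀ j, 0 < Qminus Q j)
    (hρ0 : ∀ j k, ρ0 j k ∈ Set.Icc (0 : ℝ) 1)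
    (hM : ∀ j k, 1 ≤ M j k) :
    ∃ ainf : ℕ → ℝ, (∀ j, ainf j ∈ Set.Icc (0 : ℝ) 1) ∧
      ∀ j, cascadeMap P Q ρ0 M ainf j = ainf j :=
  cascadeMap_exists_fixedPoint_general P Q ρ0 M hP hPplus hQ hQminus hρ0
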